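/- Let X be a finite partially ordered set and R a ring. Then the group of multiplicative automorphisms of I(X,R) is commutative: if φ and ψ are multiplicative ring automorphisms of I(X,R), then φ ∘ ψ = ψ ∘ φ. -/

import Mathlib

/-- A ring automorphism of the incidence algebra is *multiplicative* if it fixes every
function supported on the diagonal and maps functions vanishing on the diagonal to
functions vanishing on the diagonal. -/
def IsMultAut {X R : Type*} [Preorder X] [LocallyFiniteOrder X] [DecidableEq X] [Ring R]
    (φ : RingAut (IncidenceAlgebra R X)) : Prop :=
  (∀ f : IncidenceAlgebra R X, (∀ x y : X, x ≠ y → f x y = 0) → φ f = f) ∧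
  (∀ f : IncidenceAlgebra R X, (∀ x : X, f x x = 0) → ∀ x : X, (φ f) x x = 0)

/-!
Multiplying by the diagonal idempotents `e x` on the left and `e y` on the right cuts any `f`
down to its entry `f x y` at `(x, y)`. A multiplicative automorphism `φ` fixes these idempotents
and the scalar diagonals `d r`, so it acts on the entry at `(x, y)` as right multiplication by
`c = φ(E) x y`, where `E` is the matrix unit at `(x, y)`; writing `r E` both as `d r * E` and as
`E * d r` shows that `c` is central. Two such automorphisms therefore act on each entry by
commuting scalars.
-/

namespace IncidenceAlgebra

open Finset

variable {X R : Type*} [Preorder X] [DecidableEq X]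

section Zero

variable [Zero R]

def diag (u : X → R) : IncidenceAlgebra R X :=
  ⟨fun a b ↦ if a = b then u a else 0, fun _ _ hab ↦ if_neg fun h ↦ hab h.le⟩

lemma diag_apply (u : X → R) (a b : X) : diag u a b = if a = b then u a else 0 := rfl

lemma diag_apply_of_ne (u : X → R) {a b : X} (hab : a ≠ b) : diag u a b = 0 := if_neg hab

def single {x y : X} (h : x ≤ y) (r : R) : IncidenceAlgebra R X :=
  ⟨fun a b ↦ if a = x ∧ b = y then r else 0, fun _ _ hab ↦
    if_neg fun ⟨hax, hby⟩ ↦ hab (hax ▸ hby ▸ h)⟩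

lemma single_apply {x y : X} (h : x ≤ y) (r : R) (a b : X) :
    single h r a b = if a = x ∧ b = y then r else 0 := rfl

end Zero

section Semiring

variable [LocallyFiniteOrder X] [Semiring R]

lemma diag_mul_apply (u : X → R) (f : IncidenceAlgebra R X) (a b : X) :
    (diag u * f) a b = u a * f a b := by
  by_cases hab : a ≤ b
  · rw [mul_apply, sum_eq_single_of_mem a (left_mem_Icc.2 hab)]
    · rw [diag_apply, if_pos rfl]
    · intro z _ hza
      rw [diag_apply_of_ne u (Ne.symm hza), zero_mul]
  · simp [apply_eq_zero_of_not_le hab]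

lemma mul_diag_apply (u : X → R) (f : IncidenceAlgebra R X) (a b : X) :
    (f * diag u) a b = f a b * u b := by
  by_cases hab : a ≤ b
  · rw [mul_apply, sum_eq_single_of_mem b (right_mem_Icc.2 hab)]
    · rw [diag_apply, if_pos rfl]
    · intro z _ hzb
      rw [diag_apply_of_ne u hzb, mul_zero]
  · simp [apply_eq_zero_of_not_le hab]

lemma diag_const_mul_single {x y : X} (h : x ≤ y) (r s : R) :
    diag (fun _ ↦ r) * single h s = single h (r * s) := by
  ext a b _
  rw [diag_mul_apply, single_apply, single_apply, mul_ite, mul_zero]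

lemma single_mul_diag_const {x y : X} (h : x ≤ y) (r s : R) :
    single h s * diag (fun _ ↦ r) = single h (s * r) := by
  ext a b _
  rw [mul_diag_apply, single_apply, single_apply, ite_mul, zero_mul]

lemma diag_single_mul_mul_diag_single {x y : X} (h : x ≤ y) (f : IncidenceAlgebra R X) :
    diag (Pi.single x 1) * f * diag (Pi.single y 1) = single h (f x y) := by
  ext a b _
  rw [mul_diag_apply, diag_mul_apply, single_apply]
  by_cases ha : a = x <;> by_cases hb : b = y <;> simp [ha, hb]

lemma diag_single_mul_mul_diag_single_apply_self (x y : X) (f : IncidenceAlgebra R X) :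
    (diag (Pi.single x 1) * f * diag (Pi.single y 1) : IncidenceAlgebra R X) x y = f x y := by
  rw [mul_diag_apply, diag_mul_apply, Pi.single_eq_same, Pi.single_eq_same, one_mul, mul_one]

lemma exists_forall_map_apply_eq_mul_of_map_diag {F : Type*}
    [FunLike F (IncidenceAlgebra R X) (IncidenceAlgebra R X)]
    [MulHomClass F (IncidenceAlgebra R X) (IncidenceAlgebra R X)] (φ : F)
    (hφ : ∀ u : X → R, φ (diag u) = diag u) {x y : X} (h : x ≤ y) :
    ∃ c : R, (∀ r, Commute c r) ∧ ∀ f, φ f x y = f x y * c := by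
  set c := φ (single h 1) x y
  have map_sandwich (f : IncidenceAlgebra R X) : φ f x y = φ (single h (f x y)) x y := by
    rw [← diag_single_mul_mul_diag_single_apply_self x y (φ f), ← hφ (Pi.single x 1),
      ← hφ (Pi.single y 1), ← map_mul, ← map_mul, diag_single_mul_mul_diag_single]
  have map_single_left (r : R) : φ (single h r) x y = r * c := by
    rw [← mul_one r, ← diag_const_mul_single, map_mul, hφ, diag_mul_apply, mul_one]
  have map_single_right (r : R) : φ (single h r) x y = c * r := by
    rw [← one_mul r, ← single_mul_diag_const, map_mul, hφ, mul_diag_apply, one_mul]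
  refine ⟨c, fun r ↦ ?_, fun f ↦ ?_⟩
  · exact (map_single_right r).symm.trans (map_single_left r)
  · rw [map_sandwich, map_single_left]

end Semiring

end IncidenceAlgebra

open IncidenceAlgebra in
theorem mult_auts_commute_general {X R : Type*} [PartialOrder X]
    [LocallyFiniteOrder X] [DecidableEq X] [Ring R]
    (φ ψ : RingAut (IncidenceAlgebra R X)) (hφ : IsMultAut φ) (hψ : IsMultAut ψ) :
    ∀ f : IncidenceAlgebra R X, φ (ψ f) = ψ (φ f) := by
  have fixes_diag {χ : RingAut (IncidenceAlgebra R X)} (hχ : IsMultAut χ) (u : X → R) :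
      χ (diag u) = diag u :=
    hχ.1 _ fun _ _ ↦ diag_apply_of_ne u
  intro f
  ext a b hab
  obtain ⟨cφ, hcφ, hφf⟩ := exists_forall_map_apply_eq_mul_of_map_diag φ (fixes_diag hφ) hab
  obtain ⟨cψ, -, hψf⟩ := exists_forall_map_apply_eq_mul_of_map_diag ψ (fixes_diag hψ) hab
  rw [hφf, hψf, hψf, hφf, mul_assoc, mul_assoc, (hcφ cψ).eq]

/-- Multiplicative automorphisms of the incidence algebra of a finite
poset commute with each other (the group `Mult A` is commutative). -/
theorem mult_auts_commute {X R : Type*} [PartialOrder X] [Fintype X]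
    [LocallyFiniteOrder X] [DecidableEq X] [Ring R]
    (φ ψ : RingAut (IncidenceAlgebra R X)) (hφ : IsMultAut φ) (hψ : IsMultAut ψ) :
    ∀ f : IncidenceAlgebra R X, φ (ψ f) = ψ (φ f) :=
  mult_auts_commute_general φ ψ hφ hψ
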